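/- Let $X$ be a Banach space and $f : [a,b] \to X$ differentiable with Bochner-integrable derivative. Then $\left\| \int_a^b f(t)\,dt - \frac{b-a}{3}\left[\frac{f(a)+f(b)}{2} + 2 f\left(\frac{a+b}{2}\right)\right] \right\| \le \frac{1}{3}(b-a)\int_a^b \|f'(t)\|\,dt$. -/

import Mathlib

/-! Split `[a, b]` at its midpoint `m` and integrate by parts on each half against the Peano
kernel `t - c`, with `c = (5a + b)/6` on `[a, m]` and `c = (a + 5b)/6` on `[m, b]`. These
centres make the boundary terms add up to exactly Simpson's rule, and the kernel is bounded by
`(b - a)/3` on each half, which bounds the remaining integral against `‖f'‖`. -/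

open MeasureTheory intervalIntegral

theorem norm_integral_sub_boundary_le {X : Type*} [NormedAddCommGroup X] [NormedSpace ℝ X]
    [CompleteSpace X] {u v c M : ℝ} (huv : u ≤ v) (hcu : c - u ≤ M) (hvc : v - c ≤ M)
    {f f' : ℝ → X} (hf : ∀ t ∈ Set.Icc u v, HasDerivAt f (f' t) t)
    (hf' : IntervalIntegrable f' volume u v) :
    ‖(∫ t in u..v, f t) - ((v - c) • f v - (u - c) • f u)‖ ≤ M * ∫ t in u..v, ‖f' t‖ := by
  have hparts := integral_smul_deriv_eq_deriv_smul (u := fun t => t - c) (u' := fun _ => 1)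
    (fun t _ => (hasDerivAt_id t).sub_const c) (by rwa [Set.uIcc_of_le huv])
    intervalIntegrable_const hf'
  simp only [one_smul] at hparts
  rw [show (∫ t in u..v, f t) - ((v - c) • f v - (u - c) • f u)
      = -∫ t in u..v, (t - c) • f' t by rw [hparts]; abel, norm_neg]
  refine (norm_integral_le_of_norm_le huv (ae_of_all _ fun t ht => ?_)
    (hf'.norm.const_mul M)).trans_eq (integral_const_mul _ _)
  rw [norm_smul, Real.norm_eq_abs]
  gcongr
  exact abs_le.mpr ⟨by linarith [ht.1], by linarith [ht.2]⟩

theorem stmt19 {X : Type*} [NormedAddCommGroup X] [NormedSpace ℝ X] [CompleteSpace X]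
    {a b : ℝ} (hab : a < b) {f f' : ℝ → X}
    (hderiv : ∀ t ∈ Set.Icc a b, HasDerivAt f (f' t) t)
    (hint : IntervalIntegrable f' volume a b) :
    ‖(∫ t in a..b, f t) - ((b - a) / 3) • ((2 : ℝ)⁻¹ • (f a + f b) + (2 : ℝ) • f ((a + b) / 2))‖ ≤
      (1 / 3) * (b - a) * (∫ t in a..b, ‖f' t‖) := by
  set m := (a + b) / 2 with hm
  have ham : a ≤ m := by linarith
  have hmb : m ≤ b := by linarith
  have hm_mem : m ∈ Set.uIcc a b := Set.mem_uIcc_of_le ham hmb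
  have hIcc_left : Set.uIcc a m ⊆ Set.uIcc a b := Set.uIcc_subset_uIcc Set.left_mem_uIcc hm_mem
  have hIcc_right : Set.uIcc m b ⊆ Set.uIcc a b := Set.uIcc_subset_uIcc hm_mem Set.right_mem_uIcc
  have hf : IntervalIntegrable f volume a b := ContinuousOn.intervalIntegrable fun t ht =>
    (hderiv t (by rwa [Set.uIcc_of_le hab.le] at ht)).continuousAt.continuousWithinAt
  have hleft := norm_integral_sub_boundary_le (c := (5 * a + b) / 6) (M := (b - a) / 3) ham
    (by linarith) (by linarith) (fun t ht => hderiv t (Set.Icc_subset_Icc le_rfl hmb ht))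
    (hint.mono_set hIcc_left)
  have hright := norm_integral_sub_boundary_le (c := (a + 5 * b) / 6) (M := (b - a) / 3) hmb
    (by linarith) (by linarith) (fun t ht => hderiv t (Set.Icc_subset_Icc ham le_rfl ht))
    (hint.mono_set hIcc_right)
  have hsplit : (∫ t in a..b, f t) - ((b - a) / 3) • ((2 : ℝ)⁻¹ • (f a + f b) + (2 : ℝ) • f m)
      = ((∫ t in a..m, f t) - ((m - (5 * a + b) / 6) • f m - (a - (5 * a + b) / 6) • f a))
        + ((∫ t in m..b, f t) - ((b - (a + 5 * b) / 6) • f b - (m - (a + 5 * b) / 6) • f m)) := by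
    rw [← integral_add_adjacent_intervals (hf.mono_set hIcc_left) (hf.mono_set hIcc_right)]
    module
  calc _ ≤ _ := hsplit ▸ norm_add_le _ _
    _ ≤ _ := add_le_add hleft hright
    _ = _ := by
      rw [← mul_add, integral_add_adjacent_intervals (hint.mono_set hIcc_left).norm
        (hint.mono_set hIcc_right).norm]
      ring
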